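/- Let X be a right A-Galois object and δ the modular element of A. If φ'_X is any δ-invariant functional on X, i.e. a linear functional with (φ'_X ⊗ id)(α(x)) = φ'_X(x)·δ for all x ∈ X, then there exists c ∈ k such that φ'_X = c·φ_X. -/

import Mathlib

open TensorProduct

noncomputable section

variable (k : Type*) [Field k]

/-- Apply a linear functional to the second tensor factor. -/
def applySnd {M N : Type*} [AddCommGroup M] [Module k M]
    [AddCommGroup N] [Module k N] (f : N →ₗ[k] k) : M ⊗[k] N →ₗ[k] M :=
  (TensorProduct.rid k M).toLinearMap ∘ₗ LinearMap.lTensor M f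

/-- Apply a linear functional to the first tensor factor. -/
def applyFst {M N : Type*} [AddCommGroup M] [Module k M]
    [AddCommGroup N] [Module k N] (f : M →ₗ[k] k) : M ⊗[k] N →ₗ[k] N :=
  (TensorProduct.lid k N).toLinearMap ∘ₗ LinearMap.rTensor N f

variable (A X : Type*) [Ring A] [HopfAlgebra k A] [Ring X] [Algebra k X]

/-- The Galois map `V : X ⊗ X → X ⊗ A`, `x ⊗ y ↦ (x ⊗ 1) * α y`. -/
def galoisV (α : X →ₐ[k] X ⊗[k] A) : X ⊗[k] X →ₗ[k] X ⊗[k] A :=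
  LinearMap.mul' k (X ⊗[k] A) ∘ₗ
    TensorProduct.map ((TensorProduct.mk k X A).flip 1) α.toLinearMap

/-- A Hopf algebra with bijective antipode and faithful left integral `φ`,
together with a right Galois coaction `α` on `X` with trivial coinvariants. -/
structure GaloisContext where
  φ : A →ₗ[k] k
  φ_ne : φ ≠ 0
  φ_integral : ∀ a : A, applySnd k φ (Coalgebra.comul a) = φ a • (1 : A)
  φ_faithful_left : ∀ a : A, (∀ b : A, φ (a * b) = 0) → a = 0
  φ_faithful_right : ∀ a : A, (∀ b : A, φ (b * a) = 0) → a = 0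
  antipode_bijective : Function.Bijective (HopfAlgebra.antipode (R := k) (A := A))
  α : X →ₐ[k] X ⊗[k] A
  coassoc : ∀ x : X,
    TensorProduct.assoc k X A A ((LinearMap.rTensor A α.toLinearMap) (α x))
      = LinearMap.lTensor X (Coalgebra.comul (R := k) (A := A)) (α x)
  counit_id : ∀ x : X,
    applySnd k (Coalgebra.counit (R := k) (A := A)) (α x) = x
  coinv_trivial : ∀ x : X, α x = x ⊗ₜ[k] (1 : A) → ∃ c : k, x = c • (1 : X)
  galois : Function.Bijective (galoisV k A X α)

variable {k A X}

/-- The Galois map as a linear equivalence. -/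
def GaloisContext.V (G : GaloisContext k A X) : (X ⊗[k] X) ≃ₗ[k] (X ⊗[k] A) :=
  LinearEquiv.ofBijective (galoisV k A X G.α) G.galois

/-- The map `β : A → X ⊗ X`, `a ↦ V⁻¹(1 ⊗ a)`. -/
def GaloisContext.β (G : GaloisContext k A X) : A →ₗ[k] X ⊗[k] X :=
  G.V.symm.toLinearMap ∘ₗ TensorProduct.mk k X A 1

end

/-!
Push a `δ`-invariant functional `ψ` on `X` through `β a = V⁻¹ (1 ⊗ a)`: the map
`f a = (id ⊗ ψ)(β a)` satisfies `(f ⊗ id) Δ a = f a ⊗ δ`, because `β` intertwines `Δ` with the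
coaction on the second leg of `X ⊗ X`. Hence every scalar component `ξ ∘ f` is a `δ`-invariant
functional on `A`, and these are all multiples of `φ`: `ν ↦ ν(· δ)` turns them into right
integrals `μ`, and for a faithful left integral the strong invariance identity forces
`μ ∘ S ∈ k φ`. So `f a = φ a • v` for one `v ∈ X`, and applying `id ⊗ ψ` to
`1 ⊗ x = V⁻¹ (α x) = ∑ (x_i ⊗ 1) β a_i` gives `ψ x • 1 = φ_X x • v`, which pins `ψ` down to
`k φ_X`.
-/

open TensorProduct Coalgebra HopfAlgebra

section Contraction

variable {k : Type*} [Field k] {M N M' : Type*} [AddCommGroup M] [Module k M]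
  [AddCommGroup N] [Module k N] [AddCommGroup M'] [Module k M']

@[simp] lemma applySnd_tmul (f : N →ₗ[k] k) (x : M) (y : N) :
    applySnd k f (x ⊗ₜ[k] y) = f y • x := by
  simp [applySnd]

@[simp] lemma applyFst_tmul (f : M →ₗ[k] k) (x : M) (y : N) :
    applyFst k f (x ⊗ₜ[k] y) = f x • y := by
  simp [applyFst]

lemma apply_applySnd (f : M →ₗ[k] k) (g : N →ₗ[k] k) (t : M ⊗[k] N) :
    f (applySnd k g t) = g (applyFst k f t) := by
  induction t using TensorProduct.induction_on with
  | zero => simp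
  | tmul x y => simp [mul_comm]
  | add s t hs ht => simp only [map_add, hs, ht]

lemma applyFst_rTensor (f : M →ₗ[k] k) (g : M' →ₗ[k] M) (t : M' ⊗[k] N) :
    applyFst k f (g.rTensor N t) = applyFst k (f ∘ₗ g) t := by
  induction t using TensorProduct.induction_on with
  | zero => simp
  | tmul x y => simp
  | add s t hs ht => simp only [map_add, hs, ht]

lemma applyFst_lTensor (f : M →ₗ[k] k) (g : N →ₗ[k] M') (t : M ⊗[k] N) :
    applyFst k f (g.lTensor M t) = g (applyFst k f t) := by
  induction t using TensorProduct.induction_on with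
  | zero => simp
  | tmul x y => simp
  | add s t hs ht => simp only [map_add, hs, ht]

lemma applyFst_assoc (f : M →ₗ[k] k) (t : (M ⊗[k] N) ⊗[k] M') :
    applyFst k f (TensorProduct.assoc k M N M' t) = (applyFst k f).rTensor M' t := by
  induction t using TensorProduct.induction_on with
  | zero => simp
  | tmul x y =>
    induction x using TensorProduct.induction_on with
    | zero => simp
    | tmul x z => simp [smul_tmul']
    | add s t hs ht => simp only [add_tmul, map_add, hs, ht]
  | add s t hs ht => simp only [map_add, hs, ht]

lemma rTensor_toSpanSingleton_comp (f : M →ₗ[k] k) (v : M') (t : M ⊗[k] N) :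
    (LinearMap.toSpanSingleton k M' v ∘ₗ f).rTensor N t = v ⊗ₜ[k] applyFst k f t := by
  induction t using TensorProduct.induction_on with
  | zero => simp
  | tmul x y => simp [smul_tmul]
  | add s t hs ht => simp only [map_add, hs, ht, tmul_add]

lemma lTensor_toSpanSingleton_comp (f : N →ₗ[k] k) (v : M') (t : M ⊗[k] N) :
    (LinearMap.toSpanSingleton k M' v ∘ₗ f).lTensor M t = applySnd k f t ⊗ₜ[k] v := by
  induction t using TensorProduct.induction_on with
  | zero => simp
  | tmul x y => simp [smul_tmul]
  | add s t hs ht => simp only [map_add, hs, ht, add_tmul]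

lemma rTensor_applySnd_assoc_symm (f : N →ₗ[k] k) (s : M ⊗[k] (N ⊗[k] M')) :
    (applySnd k f).rTensor M' ((TensorProduct.assoc k M N M').symm s)
      = (applyFst k f).lTensor M s := by
  induction s using TensorProduct.induction_on with
  | zero => simp
  | tmul u w =>
    induction w using TensorProduct.induction_on with
    | zero => simp
    | tmul p q => simp [smul_tmul]
    | add s t hs ht => simp only [tmul_add, map_add, hs, ht]
  | add s t hs ht => simp only [map_add, hs, ht]

lemma exists_eq_smul_of_forall_dual_comp {φ : N →ₗ[k] k} (hφ : φ ≠ 0) (f : N →ₗ[k] M)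
    (h : ∀ ξ : Module.Dual k M, ∃ c : k, ξ ∘ₗ f = c • φ) :
    ∃ v : M, ∀ a, f a = φ a • v := by
  obtain ⟨a₀, ha₀⟩ := LinearMap.surjective_of_ne_zero hφ 1
  refine ⟨f a₀, fun a =>
    sub_eq_zero.1 <| (Module.forall_dual_apply_eq_zero_iff k _).1 fun ξ => ?_⟩
  obtain ⟨c, hc⟩ := h ξ
  have hξ : ∀ b, ξ (f b) = c * φ b := fun b => by simpa using LinearMap.congr_fun hc b
  rw [map_sub, map_smul, hξ, hξ, ha₀, smul_eq_mul]
  ring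

lemma exists_eq_smul_of_smul_eq_smul {e v : M} (he : e ≠ 0) {f g : N →ₗ[k] k}
    (h : ∀ x, f x • e = g x • v) : ∃ c : k, f = c • g := by
  by_cases hg : g = 0
  · refine ⟨0, LinearMap.ext fun x => ?_⟩
    simpa [hg, he] using h x
  · obtain ⟨x₀, hx₀⟩ := LinearMap.surjective_of_ne_zero hg 1
    have hv : v = f x₀ • e := by simpa [hx₀] using (h x₀).symm
    refine ⟨f x₀, LinearMap.ext fun x => smul_left_injective k he ?_⟩
    simp [h x, hv, smul_smul, mul_comm]

variable {B C D : Type*} [Ring B] [Algebra k B] [Ring C] [Algebra k C] [Ring D] [Algebra k D]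

lemma applySnd_tmul_one_mul (f : C →ₗ[k] k) (z : B) (t : B ⊗[k] C) :
    applySnd k f ((z ⊗ₜ[k] (1 : C)) * t) = z * applySnd k f t := by
  induction t using TensorProduct.induction_on with
  | zero => simp
  | tmul x y => simp [Algebra.TensorProduct.tmul_mul_tmul]
  | add s t hs ht => simp only [mul_add, map_add, hs, ht]

lemma applySnd_one_tmul_mul (f : C →ₗ[k] k) (x : C) (t : B ⊗[k] C) :
    applySnd k f (((1 : B) ⊗ₜ[k] x) * t) = applySnd k (f ∘ₗ LinearMap.mulLeft k x) t := by
  induction t using TensorProduct.induction_on with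
  | zero => simp
  | tmul p q => simp [Algebra.TensorProduct.tmul_mul_tmul]
  | add s t hs ht => simp only [mul_add, map_add, hs, ht]

lemma applyFst_mul_tmul (f : B →ₗ[k] k) (t : B ⊗[k] C) (c : B) (d : C) :
    applyFst k f (t * (c ⊗ₜ[k] d)) = applyFst k (f ∘ₗ LinearMap.mulRight k c) t * d := by
  induction t using TensorProduct.induction_on with
  | zero => simp
  | tmul x y => simp [Algebra.TensorProduct.tmul_mul_tmul]
  | add s t hs ht => simp only [add_mul, map_add, hs, ht]

lemma lTensor_tmul_one_mul (g : C →ₗ[k] D) (u : B) (s : B ⊗[k] C) :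
    g.lTensor B ((u ⊗ₜ[k] (1 : C)) * s) = (u ⊗ₜ[k] (1 : D)) * g.lTensor B s := by
  induction s using TensorProduct.induction_on with
  | zero => simp
  | tmul p q => simp [Algebra.TensorProduct.tmul_mul_tmul]
  | add s t hs ht => simp only [mul_add, map_add, hs, ht]

lemma assoc_symm_tmul_one_mul (u : B) (s : B ⊗[k] (C ⊗[k] D)) :
    (TensorProduct.assoc k B C D).symm ((u ⊗ₜ[k] (1 : C ⊗[k] D)) * s)
      = ((u ⊗ₜ[k] (1 : C)) ⊗ₜ[k] (1 : D)) * (TensorProduct.assoc k B C D).symm s :=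
  map_mul (Algebra.TensorProduct.assoc k k k B C D).symm (u ⊗ₜ[k] 1) s

end Contraction

section Integral

variable {k : Type*} [Field k] {A : Type*} [Ring A] [HopfAlgebra k A]

lemma applySnd_counit_comul (a : A) : applySnd k (counit (R := k)) (comul (R := k) a) = a := by
  simp [applySnd, lTensor_counit_comul]

lemma applyFst_counit_comul (a : A) : applyFst k (counit (R := k)) (comul (R := k) a) = a := by
  simp [applyFst, rTensor_counit_comul]

lemma comul_eq_tmul_of_twisted_integral {φ : A →ₗ[k] k} (hφ : φ ≠ 0) {δ : A}
    (hδ : ∀ a : A, applyFst k φ (comul a) = φ a • δ) :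
    comul (R := k) δ = δ ⊗ₜ[k] δ := by
  obtain ⟨a, ha⟩ := LinearMap.surjective_of_ne_zero hφ 1
  have hφδ : applyFst k φ ∘ₗ comul = LinearMap.toSpanSingleton k A δ ∘ₗ φ := by
    ext a; simp [hδ]
  have h := congrArg (applyFst k φ) (coassoc_apply (R := k) a)
  rwa [applyFst_assoc, ← LinearMap.rTensor_comp_apply, hφδ, rTensor_toSpanSingleton_comp,
    applyFst_lTensor, hδ, ha, one_smul, eq_comm] at h

/-- Strong left invariance: `∑ b₁ φ(a b₂) = ∑ S(a₁) φ(a₂ b)`. Both sides are `F` applied to the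
two sides of coassociativity for `Δ a`, where `F(u ⊗ v ⊗ w) = S(u) · (id ⊗ φ)((v ⊗ w) Δ b)`. -/
lemma applySnd_comp_mulLeft_comul (φ : A →ₗ[k] k)
    (hφ : ∀ a : A, applySnd k φ (comul a) = φ a • (1 : A)) (a b : A) :
    applySnd k (φ ∘ₗ LinearMap.mulLeft k a) (comul b)
      = applySnd k (φ ∘ₗ LinearMap.mulRight k b) ((antipode k).rTensor A (comul a)) := by
  set h : A →ₗ[k] A :=
    applySnd k φ ∘ₗ LinearMap.mulRight k (comul b) ∘ₗ TensorProduct.mk k A A 1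
  set F : A ⊗[k] (A ⊗[k] A) →ₗ[k] A := LinearMap.mul' k A ∘ₗ
    TensorProduct.map (antipode k) (applySnd k φ ∘ₗ LinearMap.mulRight k (comul b))
  have hF_lTensor : ∀ t : A ⊗[k] A, F ((comul (R := k)).lTensor A t)
      = applySnd k (φ ∘ₗ LinearMap.mulRight k b) ((antipode k).rTensor A t) := by
    intro t
    induction t using TensorProduct.induction_on with
    | zero => simp
    | tmul u a' => simp [F, ← Bialgebra.comul_mul, hφ]
    | add s t hs ht => simp only [map_add, hs, ht]
  have hF_assoc : ∀ (s : A ⊗[k] A) (w : A),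
      F (TensorProduct.assoc k A A A (s ⊗ₜ[k] w))
        = LinearMap.mul' k A ((antipode k).rTensor A s) * h w := by
    intro s w
    induction s using TensorProduct.induction_on with
    | zero => simp
    | tmul u v =>
      have hvw :
          (v ⊗ₜ[k] w) * comul b = (v ⊗ₜ[k] (1 : A)) * (((1 : A) ⊗ₜ[k] w) * comul b) := by
        rw [← mul_assoc, Algebra.TensorProduct.tmul_mul_tmul, mul_one, one_mul]
      simp [F, h, hvw, applySnd_tmul_one_mul, mul_assoc]
    | add s t hs ht => simp only [add_tmul, map_add, hs, ht, add_mul]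
  have hF_rTensor : ∀ t : A ⊗[k] A,
      F (TensorProduct.assoc k A A A ((comul (R := k)).rTensor A t))
        = h (applyFst k counit t) := by
    intro t
    induction t using TensorProduct.induction_on with
    | zero => simp
    | tmul u w =>
      rw [LinearMap.rTensor_tmul, hF_assoc, mul_antipode_rTensor_comul_apply, applyFst_tmul,
        map_smul, Algebra.smul_def]
    | add s t hs ht => simp only [map_add, hs, ht]
  calc applySnd k (φ ∘ₗ LinearMap.mulLeft k a) (comul b)
      = h (applyFst k counit (comul a)) := by
        rw [applyFst_counit_comul]; simp [h, applySnd_one_tmul_mul]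
    _ = F ((comul (R := k)).lTensor A (comul a)) := by rw [← hF_rTensor, coassoc_apply]
    _ = _ := hF_lTensor _

lemma applyFst_comp_mulRight_comul {δ : Aˣ}
    (hδ : comul (R := k) (δ : A) = (δ : A) ⊗ₜ[k] (δ : A))
    {ν : A →ₗ[k] k} (hν : ∀ a : A, applyFst k ν (comul a) = ν a • (δ : A)) (a : A) :
    applyFst k (ν ∘ₗ LinearMap.mulRight k (δ : A)) (comul a) = ν (a * δ) • (1 : A) := by
  have h := hν (a * δ)
  rw [Bialgebra.comul_mul, hδ, applyFst_mul_tmul] at h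
  rwa [← Units.mul_left_inj δ, smul_mul_assoc, one_mul]

lemma exists_comp_antipode_eq_smul_of_right_integral {φ : A →ₗ[k] k}
    (hφ : ∀ a : A, applySnd k φ (comul a) = φ a • (1 : A))
    (hφ_faithful : ∀ a : A, (∀ b : A, φ (a * b) = 0) → a = 0) (hφ_ne : φ ≠ 0) {μ : A →ₗ[k] k}
    (hμ : ∀ a : A, applyFst k μ (comul a) = μ a • (1 : A)) :
    ∃ c : k, μ ∘ₗ antipode k = c • φ := by
  set w : A →ₗ[k] A := applyFst k (μ ∘ₗ antipode k) ∘ₗ comul with hw_def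
  have hw : ∀ a b, φ (w a * b) = μ b * φ a := by
    intro a b
    have h := congrArg μ (applySnd_comp_mulLeft_comul φ hφ a b)
    rw [apply_applySnd, apply_applySnd, applyFst_rTensor, hμ] at h
    simpa [w] using h.symm
  obtain ⟨a₀, ha₀⟩ := LinearMap.surjective_of_ne_zero hφ_ne 1
  have hwa : ∀ a, w a = φ a • w a₀ := fun a =>
    sub_eq_zero.1 <| hφ_faithful _ fun b => by
      rw [sub_mul, map_sub, smul_mul_assoc, map_smul, hw, hw, ha₀, smul_eq_mul]
      ring
  refine ⟨counit (R := k) (w a₀), LinearMap.ext fun a => ?_⟩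
  have h := congrArg (counit (R := k)) (hwa a)
  rwa [hw_def, LinearMap.comp_apply, ← apply_applySnd, applySnd_counit_comul, map_smul,
    smul_eq_mul, mul_comm] at h

lemma exists_eq_smul_of_twisted_integral {φ : A →ₗ[k] k}
    (hφ : ∀ a : A, applySnd k φ (comul a) = φ a • (1 : A))
    (hφ_faithful : ∀ a : A, (∀ b : A, φ (a * b) = 0) → a = 0) (hφ_ne : φ ≠ 0)
    (hS : Function.Surjective (antipode k : A →ₗ[k] A))
    {δ : Aˣ} (hδ : ∀ a : A, applyFst k φ (comul a) = φ a • (δ : A))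
    {ν : A →ₗ[k] k} (hν : ∀ a : A, applyFst k ν (comul a) = ν a • (δ : A)) :
    ∃ c : k, ν = c • φ := by
  have hδδ := comul_eq_tmul_of_twisted_integral hφ_ne hδ
  set T : A →ₗ[k] A := LinearMap.mulRight k (δ : A) ∘ₗ antipode k
  have hT : Function.Surjective T := by
    have hδ_surj : Function.Surjective (LinearMap.mulRight k (δ : A)) :=
      fun b => ⟨b * ↑δ⁻¹, by simp⟩
    exact hδ_surj.comp hS
  obtain ⟨c, hc⟩ := exists_comp_antipode_eq_smul_of_right_integral hφ hφ_faithful hφ_ne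
    (applyFst_comp_mulRight_comul hδδ hν)
  obtain ⟨c₀, hc₀⟩ := exists_comp_antipode_eq_smul_of_right_integral hφ hφ_faithful hφ_ne
    (applyFst_comp_mulRight_comul hδδ hδ)
  rw [LinearMap.comp_assoc] at hc hc₀
  have hc₀_ne : c₀ ≠ 0 := by
    rintro rfl
    exact hφ_ne ((LinearMap.cancel_right hT).1 (by rw [hc₀, zero_smul, LinearMap.zero_comp]))
  refine ⟨c / c₀, (LinearMap.cancel_right hT).1 ?_⟩
  rw [LinearMap.smul_comp, hc, hc₀, smul_smul, div_mul_cancel₀ _ hc₀_ne]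

end Integral

namespace GaloisContext

variable {k : Type*} [Field k] {A X : Type*} [Ring A] [HopfAlgebra k A] [Ring X] [Algebra k X]
  (G : GaloisContext k A X)

lemma V_tmul (x y : X) : G.V (x ⊗ₜ[k] y) = (x ⊗ₜ[k] (1 : A)) * G.α y := by
  simp [GaloisContext.V, galoisV]

lemma V_tmul_one_mul (z : X) (t : X ⊗[k] X) :
    G.V ((z ⊗ₜ[k] (1 : X)) * t) = (z ⊗ₜ[k] (1 : A)) * G.V t := by
  induction t using TensorProduct.induction_on with
  | zero => simp
  | tmul x y =>
    rw [Algebra.TensorProduct.tmul_mul_tmul, one_mul, V_tmul, V_tmul, ← mul_assoc,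
      Algebra.TensorProduct.tmul_mul_tmul, mul_one]
  | add s t hs ht => simp only [mul_add, map_add, hs, ht]

lemma V_β (a : A) : G.V (G.β a) = (1 : X) ⊗ₜ[k] a := by
  simp [GaloisContext.β]

lemma V_symm_tmul (z : X) (a : A) : G.V.symm (z ⊗ₜ[k] a) = (z ⊗ₜ[k] (1 : X)) * G.β a := by
  rw [LinearEquiv.symm_apply_eq, V_tmul_one_mul, V_β, Algebra.TensorProduct.tmul_mul_tmul,
    mul_one, one_mul]

lemma V_symm_α (x : X) : G.V.symm (G.α x) = (1 : X) ⊗ₜ[k] x := by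
  rw [LinearEquiv.symm_apply_eq, V_tmul, ← Algebra.TensorProduct.one_def, one_mul]

lemma rTensor_V_assoc_symm_tmul (u : X) (s : X ⊗[k] A) :
    (G.V : X ⊗[k] X →ₗ[k] X ⊗[k] A).rTensor A ((TensorProduct.assoc k X X A).symm (u ⊗ₜ[k] s))
      = ((u ⊗ₜ[k] (1 : A)) ⊗ₜ[k] (1 : A)) * G.α.toLinearMap.rTensor A s := by
  induction s using TensorProduct.induction_on with
  | zero => simp
  | tmul p q => simp [V_tmul, Algebra.TensorProduct.tmul_mul_tmul]
  | add s t hs ht => simp only [tmul_add, map_add, hs, ht, mul_add]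

lemma rTensor_V_lTensor_α (t : X ⊗[k] X) :
    (G.V : X ⊗[k] X →ₗ[k] X ⊗[k] A).rTensor A
        ((TensorProduct.assoc k X X A).symm (G.α.toLinearMap.lTensor X t))
      = (TensorProduct.assoc k X A A).symm ((comul (R := k) (A := A)).lTensor X (G.V t)) := by
  induction t using TensorProduct.induction_on with
  | zero => simp
  | tmul u v =>
    rw [LinearMap.lTensor_tmul, AlgHom.toLinearMap_apply, rTensor_V_assoc_symm_tmul, V_tmul,
      lTensor_tmul_one_mul, assoc_symm_tmul_one_mul, ← G.coassoc, LinearEquiv.symm_apply_apply]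
  | add s t hs ht => simp only [map_add, hs, ht]

lemma assoc_symm_lTensor_α_β (a : A) :
    (TensorProduct.assoc k X X A).symm (G.α.toLinearMap.lTensor X (G.β a))
      = G.β.rTensor A (comul a) := by
  apply (G.V.rTensor A).injective
  rw [← LinearEquiv.coe_coe, LinearEquiv.coe_rTensor, rTensor_V_lTensor_α, V_β,
    LinearMap.lTensor_tmul, ← LinearMap.rTensor_comp_apply]
  induction comul (R := k) a using TensorProduct.induction_on with
  | zero => simp
  | tmul p q => simp [V_β]
  | add s t hs ht => simp only [tmul_add, map_add, hs, ht]

lemma applyFst_comp_applySnd_β_comul {f : X →ₗ[k] k} {δ : A}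
    (hf : ∀ x : X, applyFst k f (G.α x) = f x • δ) (ξ : X →ₗ[k] k) (a : A) :
    applyFst k (ξ ∘ₗ applySnd k f ∘ₗ G.β) (comul a) = ξ (applySnd k f (G.β a)) • δ := by
  have hfα : applyFst k f ∘ₗ G.α.toLinearMap = LinearMap.toSpanSingleton k A δ ∘ₗ f := by
    ext x; simp [hf]
  rw [← applyFst_rTensor, LinearMap.rTensor_comp_apply, ← assoc_symm_lTensor_α_β,
    rTensor_applySnd_assoc_symm, ← LinearMap.lTensor_comp_apply, hfα,
    lTensor_toSpanSingleton_comp, applyFst_tmul]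

lemma smul_one_eq_applySnd_α_mul (ψ : A →ₗ[k] k) {f : X →ₗ[k] k} {v : X}
    (hv : ∀ a, applySnd k f (G.β a) = ψ a • v) (x : X) :
    f x • (1 : X) = applySnd k ψ (G.α x) * v := by
  have key : applySnd k f ∘ₗ G.V.symm.toLinearMap = LinearMap.mulRight k v ∘ₗ applySnd k ψ :=
    TensorProduct.ext' fun z a => by
      simp [V_symm_tmul, applySnd_tmul_one_mul, hv]
  simpa [V_symm_α] using LinearMap.congr_fun key (G.α x)

end GaloisContext

theorem galois_object_delta_invariant_functional_unique
    {k : Type*} [Field k] {A X : Type*} [Ring A] [HopfAlgebra k A]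
    [Ring X] [Algebra k X] [Nontrivial X]
    (G : GaloisContext k A X)
    (φX : X →ₗ[k] k)
    (hφX : ∀ x : X, applySnd k G.φ (G.α x) = φX x • (1 : X))
    (δ : Aˣ) (hδ : ∀ a : A, applyFst k G.φ (Coalgebra.comul a) = G.φ a • (↑δ : A))
    (φX' : X →ₗ[k] k)
    (hφX' : ∀ x : X, applyFst k φX' (G.α x) = φX' x • (↑δ : A)) :
    ∃ c : k, φX' = c • φX := by
  obtain ⟨v, hv⟩ := exists_eq_smul_of_forall_dual_comp G.φ_ne (applySnd k φX' ∘ₗ G.β)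
    fun ξ => exists_eq_smul_of_twisted_integral G.φ_integral G.φ_faithful_left G.φ_ne
      G.antipode_bijective.2 hδ (G.applyFst_comp_applySnd_β_comul hφX' ξ)
  refine exists_eq_smul_of_smul_eq_smul (e := (1 : X)) (v := v) one_ne_zero fun x => ?_
  rw [G.smul_one_eq_applySnd_α_mul G.φ hv, hφX, smul_mul_assoc, one_mul]
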